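/- arXiv:1101.0259 — 2 statements merged into one kernel-verified Lean document; each statement's English description precedes it below -/
import Mathlib

section
/- For y ≥ exp(26000) and σ = 1 − 1/(2 log y), the product over primes p ≤ y of (1 − p^{−σ})^{−1} is less than 7.6515 log y. -/
/-!
Write `δ = 1 - σ = 1 / (2 log y)`, so that `p ^ (-σ) = exp (δ log p) / p`.

For `p ≤ 512` we have `δ log p ≤ 1/100`, hence `(1 - p ^ (-σ))⁻¹ ≤ p / (p - 100/99)`, and the
product of these finitely many rational numbers is at most `12` by direct computation.

For `512 < p ≤ y` we have `δ log p ≤ 1/2`, and `exp t ≤ 1 + 1.3 t` on `[0, 1/2]` gives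
`log (1 - p ^ (-σ))⁻¹ ≤ 1/p + 1.3 δ log p / p + 3 / p²`. Legendre's formula for `log n!`
yields Mertens-type bounds `log n - 5/2 ≤ ∑_{p ≤ n} log p / p ≤ log n + log 4`; by partial
summation against `1 / log` the sum of `1/p` is at most `log log y - 1.17`, while
`δ ∑ log p / p ≤ 1/2 + 10⁻⁴` and `∑ 3 / p² ≤ 3/512`. So the tail of the product is at most
`exp (-1/2) log y`, and `12 exp (-1/2) < 7.6515`.
-/

open Finset Real
open Nat (primesLE mem_primesLE)
open scoped Nat

namespace PartialEulerProduct

theorem sum_Ioc_le_sub_of_le_sub {α : Type*} [AddCommGroup α] [PartialOrder α]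
    [IsOrderedAddMonoid α] {f g : ℕ → α} {a b : ℕ} (hab : a ≤ b)
    (h : ∀ m, a ≤ m → m < b → f (m + 1) ≤ g (m + 1) - g m) :
    ∑ m ∈ Ioc a b, f m ≤ g b - g a := by
  induction b, hab using Nat.le_induction with
  | base => simp
  | succ b hab ih =>
    rw [sum_Ioc_succ_top hab]
    have hsum := ih fun m ham hmb => h m ham (hmb.trans (Nat.lt_succ_self b))
    exact (add_le_add hsum (h b hab (Nat.lt_succ_self b))).trans_eq (by abel)

theorem exp_one_half_lt : exp (1 / 2) < 1.65 := by
  have hsq : exp (1 / 2) ^ 2 = exp 1 := by rw [← exp_nat_mul]; norm_num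
  nlinarith [exp_one_lt_d9, exp_pos (1 / 2)]

theorem exp_one_point_eight_lt : exp 1.8 < 6.2 := by
  have hsplit : exp 1.8 * exp 0.2 = exp 1 ^ 2 := by
    rw [← exp_add, ← exp_nat_mul]; norm_num
  nlinarith [exp_one_lt_d9, exp_pos 1, add_one_le_exp (0.2 : ℝ), exp_pos 1.8]

theorem log_512_eq : log 512 = 9 * log 2 := by
  rw [show (512 : ℝ) = 2 ^ 9 by norm_num, log_pow]; norm_num

theorem log_four_eq : log 4 = 2 * log 2 := by
  rw [show (4 : ℝ) = 2 ^ 2 by norm_num, log_pow]; norm_num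

theorem one_point_eight_lt_log_log_512 : 1.8 < log (log 512) := by
  have h62 : 6.2 < log 512 := by rw [log_512_eq]; linarith [log_two_gt_d9]
  rw [lt_log_iff_exp_lt (by linarith)]
  exact exp_one_point_eight_lt.trans h62

/-- `1.3` exceeds `2 (√e - 1)`, the slope of the chord of `exp` over `[0, 1/2]`. -/
theorem exp_le_one_add_mul {t : ℝ} (ht0 : 0 ≤ t) (ht : t ≤ 1 / 2) : exp t ≤ 1 + 1.3 * t := by
  have hchord := convexOn_exp.2 (Set.mem_univ 0) (Set.mem_univ (1 / 2))
    (by linarith : (0 : ℝ) ≤ 1 - 2 * t) (by linarith : (0 : ℝ) ≤ 2 * t) (by ring)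
  simp only [smul_eq_mul, mul_zero, zero_add, exp_zero, mul_one] at hchord
  rw [show 2 * t * (1 / 2 : ℝ) = t by ring] at hchord
  nlinarith [exp_one_half_lt]

theorem log_inv_one_sub_le {u : ℝ} (hu0 : 0 ≤ u) (hu1 : u < 1) :
    log (1 - u)⁻¹ ≤ u + u ^ 2 / (1 - u) := by
  have h := abs_log_sub_add_sum_range_le (by rwa [abs_of_nonneg hu0]) 1
  simp only [sum_range_one, abs_of_nonneg hu0] at h
  rw [log_inv]
  linarith [(abs_le.mp h).1]

theorem rpow_neg_eq_exp_div {x : ℝ} (hx : 0 < x) (σ : ℝ) :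
    x ^ (-σ) = exp ((1 - σ) * log x) / x := by
  rw [rpow_def_of_pos hx, show log x * -σ = (1 - σ) * log x - log x by ring, exp_sub, exp_log hx]

theorem inv_one_sub_prime_rpow_neg_pos {p : ℕ} (hp : p.Prime) {σ : ℝ} (hσ : 0 < σ) :
    0 < (1 - (p : ℝ) ^ (-σ))⁻¹ :=
  inv_pos.2 <| sub_pos.2 <|
    rpow_lt_one_of_one_lt_of_neg (by exact_mod_cast hp.one_lt) (neg_neg_of_pos hσ)

theorem inv_one_sub_rpow_neg_le {x a σ : ℝ} (hax : a < x) (ha : exp ((1 - σ) * log x) ≤ a) :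
    (1 - x ^ (-σ))⁻¹ ≤ x / (x - a) := by
  have hx : 0 < x := (exp_pos _).trans_le ha |>.trans hax
  rw [rpow_neg_eq_exp_div hx, ← inv_div (x - a)]
  apply inv_anti₀ (div_pos (by linarith) hx)
  rw [sub_div, div_self hx.ne']
  gcongr

theorem log_inv_one_sub_rpow_neg_le {x σ : ℝ} (hx : 100 ≤ x) (hσ : σ ≤ 1)
    (hσx : (1 - σ) * log x ≤ 1 / 2) :
    log (1 - x ^ (-σ))⁻¹ ≤ x⁻¹ + 1.3 * ((1 - σ) * (log x / x)) + 3 * (x ^ 2)⁻¹ := by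
  have hx0 : 0 < x := by linarith
  set t := (1 - σ) * log x
  have ht0 : 0 ≤ t := mul_nonneg (by linarith) (log_nonneg (by linarith))
  have het : exp t < 1.65 := (exp_le_exp.2 hσx).trans_lt exp_one_half_lt
  set u := exp t / x with hu
  have hu0 : 0 ≤ u := by positivity
  have hu1 : u ≤ 0.0165 := by
    rw [div_le_iff₀ hx0]; nlinarith
  have hlin : u ≤ x⁻¹ + 1.3 * ((1 - σ) * (log x / x)) := by
    rw [← mul_div_assoc, hu, div_le_iff₀ hx0, add_mul, inv_mul_cancel₀ hx0.ne', mul_assoc,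
      div_mul_cancel₀ _ hx0.ne']
    exact exp_le_one_add_mul ht0 hσx
  have hsq : u ^ 2 / (1 - u) ≤ 3 * (x ^ 2)⁻¹ := by
    rw [← div_eq_mul_inv, div_le_div_iff₀ (by linarith) (by positivity), hu, div_pow,
      div_mul_cancel₀ _ (by positivity)]
    nlinarith [exp_pos t]
  rw [rpow_neg_eq_exp_div hx0]
  linarith [log_inv_one_sub_le hu0 (by linarith)]

noncomputable def mertensSum (n : ℕ) : ℝ := ∑ p ∈ primesLE n, log p / p

theorem mertensSum_succ (n : ℕ) :
    mertensSum (n + 1) = mertensSum n + if (n + 1).Prime then log (n + 1) / (n + 1) else 0 := by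
  unfold mertensSum
  rw [Nat.primesLE_succ]
  split_ifs
  · rw [sum_insert (Nat.notMem_primesLE n), add_comm]; push_cast; rfl
  · rw [add_zero]

theorem log_factorial_eq_sum_primesLE (n : ℕ) :
    log (n ! : ℕ) = ∑ p ∈ primesLE n, (n !).factorization p * log p := by
  rw [log_nat_eq_sum_factorization]
  refine Finsupp.sum_of_support_subset _ (fun p hp => ?_) _ (by simp)
  rw [Nat.support_factorization, Nat.mem_primeFactors] at hp
  exact mem_primesLE.2 ⟨(hp.1.dvd_factorial).1 hp.2.1, hp.1⟩

theorem div_le_factorization_factorial {p : ℕ} (hp : p.Prime) (n : ℕ) :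
    n / p ≤ (n !).factorization p := by
  rcases n.eq_zero_or_pos with rfl | hn
  · simp
  rw [Nat.factorization_factorial hp (Nat.lt_succ_of_le (Nat.log_le_self p n))]
  simpa using single_le_sum (f := fun i => n / p ^ i) (fun _ _ => Nat.zero_le _)
    (mem_Ico.2 ⟨le_rfl, Nat.succ_lt_succ hn⟩)

theorem mertensSum_le (n : ℕ) : mertensSum n ≤ log n + log 4 := by
  rcases n.eq_zero_or_pos with rfl | hn
  · simp [mertensSum]; positivity
  have hn' : (0 : ℝ) < n := by exact_mod_cast hn
  have hfloor : ∀ p ∈ primesLE n, (n / p : ℝ) * log p ≤ (n !).factorization p * log p + log p := by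
    intro p hp
    have hp := Nat.prime_of_mem_primesLE hp
    have hp0 : (0 : ℝ) < p := by exact_mod_cast hp.pos
    have hdiv : (n / p : ℝ) ≤ (n / p : ℕ) + 1 := by
      have h : (n : ℝ) ≤ (n / p : ℕ) * p + p := by exact_mod_cast (Nat.lt_div_mul_add hp.pos).le
      rw [div_le_iff₀ hp0]; linarith
    have hleg : ((n / p : ℕ) : ℝ) ≤ (n !).factorization p := by
      exact_mod_cast div_le_factorization_factorial hp n
    nlinarith [log_natCast_nonneg p]
  have htheta := Chebyshev.theta_le_log4_mul_x hn'.le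
  rw [Chebyshev.theta_eq_sum_primesLE_log] at htheta
  have hfact : log (n ! : ℕ) ≤ n * log n := by
    rw [← log_pow]
    exact log_le_log (by positivity) (by exact_mod_cast Nat.factorial_le_pow n)
  have hsum : n * mertensSum n ≤ n * (log n + log 4) := calc
    n * mertensSum n = ∑ p ∈ primesLE n, (n / p : ℝ) * log p := by
      rw [mertensSum, mul_sum]; exact sum_congr rfl fun p _ => by ring
    _ ≤ ∑ p ∈ primesLE n, ((n !).factorization p * log p + log p) := sum_le_sum hfloor
    _ ≤ n * (log n + log 4) := by
      rw [sum_add_distrib, ← log_factorial_eq_sum_primesLE]; linarith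
  exact le_of_mul_le_mul_left hsum hn'

theorem succ_mul_log_succ_sub_log_le {m : ℕ} (hm : 1 ≤ m) :
    ((m : ℝ) + 1) * (log (m + 1) - log m) ≤ 3 / 2 := by
  rcases hm.eq_or_lt with rfl | hm
  · norm_num; linarith [log_two_lt_d9]
  have hm0 : (2 : ℝ) ≤ m := by exact_mod_cast hm
  have hlog : log (m + 1) - log m ≤ 1 / m := by
    rw [← log_div (by positivity) (by positivity)]
    exact (log_le_sub_one_of_pos (by positivity)).trans_eq (by field_simp; ring)
  calc ((m : ℝ) + 1) * (log (m + 1) - log m) ≤ (m + 1) * (1 / m) := by gcongr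
    _ ≤ 3 / 2 := by rw [mul_one_div, div_le_iff₀ (by positivity)]; linarith

theorem sum_Ioc_log_div_mul_sub_one_le (n : ℕ) :
    ∑ m ∈ Ioc 1 n, log m / (m * (m - 1)) ≤ 3 / 2 := by
  rcases Nat.lt_or_ge n 1 with hn | hn
  · simp [Ioc_eq_empty_of_le (by omega : n ≤ 1)]; norm_num
  have htel := sum_Ioc_le_sub_of_le_sub (f := fun m : ℕ => log m / (m * (m - 1)))
    (g := fun m : ℕ => -((log m + 3 / 2) / m)) hn fun m hm _ => by
      have hm0 : (0 : ℝ) < m := by exact_mod_cast hm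
      have key := succ_mul_log_succ_sub_log_le hm
      push_cast
      rw [add_sub_cancel_right, ← sub_nonneg]
      have : -((log (m + 1) + 3 / 2) / (m + 1)) - -((log m + 3 / 2) / m) -
          log (m + 1) / ((m + 1) * m) =
            (3 / 2 - (m + 1) * (log (m + 1) - log m)) / ((m + 1) * m) := by
        field_simp; ring
      rw [this]; apply div_nonneg (by linarith) (by positivity)
  have hn0 : 0 ≤ (log n + 3 / 2) / n := by positivity
  simp only [Nat.cast_one, log_one] at htel
  linarith

theorem log_sub_le_mertensSum (n : ℕ) : log n - 5 / 2 ≤ mertensSum n := by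
  rcases n.eq_zero_or_pos with rfl | hn
  · simp [mertensSum]; norm_num
  have hn' : (0 : ℝ) < n := by exact_mod_cast hn
  have hleg : ∀ p ∈ primesLE n, ((n !).factorization p : ℝ) * log p ≤
      n * (log p / p) + n * (log p / (p * (p - 1))) := by
    intro p hp
    have hp := Nat.prime_of_mem_primesLE hp
    have hp2 : (2 : ℝ) ≤ p := by exact_mod_cast hp.two_le
    have hp1 : (p : ℝ) - 1 ≠ 0 := by linarith
    have hval : ((n !).factorization p : ℝ) ≤ n / (p - 1) := by
      calc ((n !).factorization p : ℝ) ≤ ((n / (p - 1) : ℕ) : ℝ) := by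
            exact_mod_cast Nat.factorization_factorial_le_div_pred hp n
        _ ≤ n / ((p - 1 : ℕ) : ℝ) := Nat.cast_div_le
        _ = n / (p - 1) := by rw [Nat.cast_pred hp.pos]
    calc ((n !).factorization p : ℝ) * log p ≤ n / (p - 1) * log p :=
          mul_le_mul_of_nonneg_right hval (log_natCast_nonneg p)
      _ = n * (log p / p) + n * (log p / (p * (p - 1))) := by
          field_simp; ring
  have hser : ∑ p ∈ primesLE n, log p / (p * (p - 1)) ≤ 3 / 2 := by
    refine le_trans (sum_le_sum_of_subset_of_nonneg (fun p hp => ?_) fun m hm _ => ?_)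
      (sum_Ioc_log_div_mul_sub_one_le n)
    · have := mem_primesLE.1 hp
      exact mem_Ioc.2 ⟨this.2.one_lt, this.1⟩
    · have hm2 : (2 : ℝ) ≤ m := by exact_mod_cast (mem_Ioc.1 hm).1
      exact div_nonneg (log_natCast_nonneg m) (by nlinarith)
  have hupper : log (n ! : ℕ) ≤ n * mertensSum n + n * (3 / 2) := by
    rw [log_factorial_eq_sum_primesLE]
    refine (sum_le_sum hleg).trans ?_
    rw [sum_add_distrib, ← mul_sum, ← mul_sum, mertensSum]
    gcongr
  have hstirling := Stirling.le_log_factorial_stirling hn.ne'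
  have hlog2pi : 0 ≤ log (2 * π) := log_nonneg (by linarith [pi_gt_three])
  have hlogn : 0 ≤ log n := log_natCast_nonneg n
  have hmul : n * (log n - 5 / 2) ≤ n * mertensSum n := by linarith
  exact le_of_mul_le_mul_left hmul hn'

theorem primesLE_sdiff_primesLE (a b : ℕ) :
    primesLE b \ primesLE a = {p ∈ Ioc a b | p.Prime} := by
  ext p
  simp only [mem_sdiff, mem_primesLE, mem_filter, mem_Ioc]
  grind

theorem sum_inv_prime_le {a b : ℕ} (ha : 2 ≤ a) (hab : a ≤ b) :
    ∑ p ∈ primesLE b \ primesLE a, (p : ℝ)⁻¹ ≤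
      (mertensSum b - log 4) / log b + log (log b) -
        ((mertensSum a - log 4) / log a + log (log a)) := by
  rw [primesLE_sdiff_primesLE, sum_filter]
  refine sum_Ioc_le_sub_of_le_sub
    (g := fun m : ℕ => (mertensSum m - log 4) / log m + log (log m)) hab fun m ham _ => ?_
  have hm : (2 : ℝ) ≤ m := by exact_mod_cast ha.trans ham
  have hlm : 0 < log m := log_pos (by linarith)
  have hlm1 : log m ≤ log (m + 1) := log_le_log (by linarith) (by linarith)
  have hlm1' : 0 < log (m + 1) := by linarith
  have hstep : (mertensSum m - log 4) * ((log m)⁻¹ - (log (m + 1))⁻¹) ≤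
      log (log (m + 1)) - log (log m) := calc
    _ ≤ log m * ((log m)⁻¹ - (log (m + 1))⁻¹) :=
        mul_le_mul_of_nonneg_right (by linarith [mertensSum_le m])
          (sub_nonneg.2 (inv_anti₀ hlm hlm1))
    _ = 1 - (log (m + 1) / log m)⁻¹ := by field_simp
    _ ≤ log (log (m + 1) / log m) := one_sub_inv_le_log_of_pos (div_pos hlm1' hlm)
    _ = log (log (m + 1)) - log (log m) := log_div hlm1'.ne' hlm.ne'
  push_cast
  rw [mertensSum_succ]
  split_ifs
  · have : (mertensSum m + log (m + 1) / (m + 1) - log 4) / log (m + 1) =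
        (mertensSum m - log 4) / log (m + 1) + ((m : ℝ) + 1)⁻¹ := by
      field_simp; ring
    rw [this]
    linear_combination hstep
  · rw [add_zero]
    linear_combination hstep

theorem sum_inv_sq_Ioc_le {a : ℕ} (ha : 1 ≤ a) (b : ℕ) :
    ∑ m ∈ Ioc a b, ((m : ℝ) ^ 2)⁻¹ ≤ (a : ℝ)⁻¹ := by
  rcases Nat.lt_or_ge b a with hb | hb
  · simp [Ioc_eq_empty_of_le hb.le]
  have htel := sum_Ioc_le_sub_of_le_sub (f := fun m : ℕ => ((m : ℝ) ^ 2)⁻¹)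
    (g := fun m : ℕ => -(m : ℝ)⁻¹) hb fun m hm _ => by
      have hm0 : (0 : ℝ) < m := by exact_mod_cast ha.trans hm
      push_cast
      rw [neg_sub_neg, inv_sub_inv hm0.ne' (by positivity), add_sub_cancel_left, one_div]
      exact inv_anti₀ (by positivity) (by nlinarith)
  have : (0 : ℝ) ≤ (b : ℝ)⁻¹ := by positivity
  linarith

theorem sum_inv_prime_sdiff_primesLE_512_le {N : ℕ} (hN : 512 ≤ N) :
    ∑ p ∈ primesLE N \ primesLE 512, (p : ℝ)⁻¹ ≤ log (log N) - 1.17 := by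
  have hlN : 0 < log N := log_pos (by exact_mod_cast (by omega : 1 < N))
  have hl512 : 0 < log 512 := by rw [log_512_eq]; positivity
  have hAN : (mertensSum N - log 4) / log N ≤ 1 :=
    (div_le_one hlN).2 (by linarith [mertensSum_le N])
  have hA512 : 0.376 ≤ (mertensSum 512 - log 4) / log 512 := by
    have h := log_sub_le_mertensSum 512
    push_cast at h
    rw [le_div_iff₀ hl512]
    linarith [log_512_eq, log_four_eq, log_two_gt_d9]
  have := sum_inv_prime_le (by norm_num) hN
  push_cast at this
  linarith [one_point_eight_lt_log_log_512]

theorem sum_log_inv_one_sub_rpow_neg_le {y σ : ℝ} {N : ℕ} (hN : 512 ≤ N) (hNy : (N : ℝ) ≤ y)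
    (hy : 26000 ≤ log y) (hσ : σ = 1 - 1 / (2 * log y)) :
    ∑ p ∈ primesLE N \ primesLE 512, log (1 - (p : ℝ) ^ (-σ))⁻¹ ≤ log (log y) - 1 / 2 := by
  have hδ : 1 - σ = 1 / (2 * log y) := by rw [hσ]; ring
  have hδ0 : 0 ≤ 1 - σ := by rw [hδ]; positivity
  have hN0 : (1 : ℝ) < N := by exact_mod_cast (by omega : 1 < N)
  have hlogN : log N ≤ log y := log_le_log (by linarith) hNy
  have hpoint : ∀ p ∈ primesLE N \ primesLE 512, log (1 - (p : ℝ) ^ (-σ))⁻¹ ≤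
      (p : ℝ)⁻¹ + 1.3 * ((1 - σ) * (log p / p)) + 3 * ((p : ℝ) ^ 2)⁻¹ := by
    intro p hp
    rw [primesLE_sdiff_primesLE, mem_filter, mem_Ioc] at hp
    have hp100 : (100 : ℝ) ≤ p := by exact_mod_cast (by omega : 100 ≤ p)
    have hlogp : log p ≤ log y := log_le_log (by linarith) (le_trans (by exact_mod_cast hp.1.2) hNy)
    have hδp : (1 - σ) * log p ≤ 1 / 2 := by
      rw [hδ, div_mul_eq_mul_div, one_mul, div_le_iff₀ (by linarith)]; linarith
    exact log_inv_one_sub_rpow_neg_le hp100 (by linarith) hδp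
  have hrecip := sum_inv_prime_sdiff_primesLE_512_le hN
  have hloglog : log (log N) ≤ log (log y) := log_le_log (log_pos hN0) hlogN
  have hmertens : (1 - σ) * ∑ p ∈ primesLE N \ primesLE 512, log p / p ≤ 1 / 2 + 0.0001 := by
    have hsub : ∑ p ∈ primesLE N \ primesLE 512, log p / p ≤ log y + log 4 :=
      (sum_le_sum_of_subset_of_nonneg sdiff_subset fun p _ _ => by positivity).trans
        ((mertensSum_le N).trans (by linarith))
    calc (1 - σ) * ∑ p ∈ primesLE N \ primesLE 512, log p / p ≤ (1 - σ) * (log y + log 4) :=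
          mul_le_mul_of_nonneg_left hsub hδ0
      _ = 1 / 2 + log 4 / (2 * log y) := by rw [hδ]; field_simp
      _ ≤ 1 / 2 + 0.0001 := by
          rw [add_le_add_iff_left, div_le_iff₀ (by linarith)]
          linarith [log_four_eq, log_two_lt_d9]
  have hsq : ∑ p ∈ primesLE N \ primesLE 512, ((p : ℝ) ^ 2)⁻¹ ≤ (512 : ℝ)⁻¹ := by
    rw [primesLE_sdiff_primesLE]
    exact (sum_le_sum_of_subset_of_nonneg (filter_subset _ _) fun _ _ _ => by positivity).trans
      (by exact_mod_cast sum_inv_sq_Ioc_le (by norm_num) N)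
  refine (sum_le_sum hpoint).trans ?_
  rw [sum_add_distrib, sum_add_distrib, ← mul_sum, ← mul_sum, ← mul_sum]
  norm_num at hsq ⊢
  linarith

theorem prod_tail_le {y σ : ℝ} {N : ℕ} (hN : 512 ≤ N) (hNy : (N : ℝ) ≤ y)
    (hy : 26000 ≤ log y) (hσ : σ = 1 - 1 / (2 * log y)) :
    ∏ p ∈ primesLE N \ primesLE 512, (1 - (p : ℝ) ^ (-σ))⁻¹ ≤ log y / exp (1 / 2) := by
  have hσ0 : 0 < σ := by
    rw [hσ, sub_pos, div_lt_one (by linarith)]; linarith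
  have hpos : ∀ p ∈ primesLE N \ primesLE 512, 0 < (1 - (p : ℝ) ^ (-σ))⁻¹ := fun p hp =>
    inv_one_sub_prime_rpow_neg_pos (Nat.prime_of_mem_primesLE (mem_sdiff.1 hp).1) hσ0
  rw [← exp_log (prod_pos hpos), log_prod fun p hp => (hpos p hp).ne']
  calc exp (∑ p ∈ primesLE N \ primesLE 512, log (1 - (p : ℝ) ^ (-σ))⁻¹)
      ≤ exp (log (log y) - 1 / 2) :=
        exp_le_exp.2 (sum_log_inv_one_sub_rpow_neg_le hN hNy hy hσ)
    _ = log y / exp (1 / 2) := by rw [exp_sub, exp_log (by linarith)]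

theorem prod_mul_99_le_twelve_mul_prod : ∏ p ∈ primesLE 512, 99 * p ≤
    12 * ∏ p ∈ primesLE 512, (99 * p - 100) := by
  decide +kernel

theorem prod_primesLE_512_le {σ : ℝ} (hσ1 : σ ≤ 1) (hσ : (1 - σ) * 512 ≤ 1 / 100) :
    ∏ p ∈ primesLE 512, (1 - (p : ℝ) ^ (-σ))⁻¹ ≤ 12 := by
  have hfac : ∀ p ∈ primesLE 512, (1 - (p : ℝ) ^ (-σ))⁻¹ ≤ (99 * p : ℕ) / (99 * p - 100 : ℕ) := by
    intro p hp
    obtain ⟨hp512, hp⟩ := mem_primesLE.1 hp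
    have hp2 : 2 ≤ p := hp.two_le
    have hp2' : (2 : ℝ) ≤ p := by exact_mod_cast hp2
    have hexp : exp ((1 - σ) * log p) ≤ 100 / 99 := by
      have hlogp : log p ≤ 512 := (log_le_self (by positivity)).trans (by exact_mod_cast hp512)
      calc exp ((1 - σ) * log p) ≤ exp (1 / 100) :=
            exp_le_exp.2 ((mul_le_mul_of_nonneg_left hlogp (by linarith)).trans hσ)
        _ ≤ 1 / (1 - 1 / 100) := exp_bound_div_one_sub_of_interval (by norm_num) (by norm_num)
        _ = 100 / 99 := by norm_num
    refine (inv_one_sub_rpow_neg_le (by linarith) hexp).trans_eq ?_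
    rw [Nat.cast_sub (by omega), div_eq_div_iff (by linarith) (by push_cast; linarith)]
    push_cast; ring
  have hpos : ∀ p ∈ primesLE 512, 0 ≤ (1 - (p : ℝ) ^ (-σ))⁻¹ := fun p hp =>
    (inv_one_sub_prime_rpow_neg_pos (Nat.prime_of_mem_primesLE hp) (by linarith)).le
  have hden : (0 : ℝ) < ∏ p ∈ primesLE 512, ((99 * p - 100 : ℕ) : ℝ) :=
    prod_pos fun p hp => by
      have := Nat.two_le_of_mem_primesLE hp
      exact_mod_cast (by omega : 0 < 99 * p - 100)
  refine (prod_le_prod hpos hfac).trans ?_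
  rw [prod_div_distrib, div_le_iff₀ hden]
  exact_mod_cast prod_mul_99_le_twelve_mul_prod

end PartialEulerProduct

open PartialEulerProduct

/-- For `y ≥ exp(26000)` and `σ = 1 − 1/(2 log y)`,
`∏_{p ≤ y} (1 − p^{−σ})⁻¹ < 7.6515 log y`. -/
theorem stmt3 (y : ℝ) (hy : Real.exp 26000 ≤ y) (σ : ℝ)
    (hσ : σ = 1 - 1 / (2 * Real.log y)) :
    ∏ p ∈ (Finset.range (⌊y⌋₊ + 1)).filter Nat.Prime,
      (1 - (p : ℝ) ^ (-σ))⁻¹ < 7.6515 * Real.log y := by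
  have hy0 : 0 < y := (exp_pos _).trans_le hy
  have hlog : 26000 ≤ log y := (le_log_iff_exp_le hy0).2 hy
  have hN : 512 ≤ ⌊y⌋₊ :=
    Nat.le_floor (by rw [Nat.cast_ofNat]; linarith [add_one_le_exp (26000 : ℝ)])
  have hσ0 : 0 < σ := by rw [hσ, sub_pos, div_lt_one (by linarith)]; linarith
  have hσ1 : σ ≤ 1 := by rw [hσ]; linarith [show 0 ≤ 1 / (2 * log y) by positivity]
  have hσ512 : (1 - σ) * 512 ≤ 1 / 100 := by
    rw [hσ, sub_sub_cancel, div_mul_eq_mul_div, one_mul, div_le_iff₀ (by linarith)]; linarith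
  rw [← Nat.primesLE_eq_filter_range, ← prod_sdiff (Nat.primesLE_mono hN)]
  calc _ ≤ log y / exp (1 / 2) * 12 :=
        mul_le_mul (prod_tail_le hN (Nat.floor_le hy0.le) hlog hσ)
          (prod_primesLE_512_le hσ1 hσ512)
          (prod_nonneg fun p hp =>
            (inv_one_sub_prime_rpow_neg_pos (Nat.prime_of_mem_primesLE hp) hσ0).le)
          (by positivity)
    _ < 7.6515 * log y := by
        rw [div_mul_eq_mul_div, div_lt_iff₀ (exp_pos _)]
        nlinarith [quadratic_le_exp_of_nonneg (by norm_num : (0 : ℝ) ≤ 1 / 2)]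
end

section
/- For any real σ ∈ (0,1), real x ≥ 1, and real y ≥ 2, the number ψ(x,y) of y-smooth integers n ≤ x satisfies ψ(x,y) ≤ x^σ · ∏_{p ≤ y} (1 − p^{−σ})^{−1}, where the product runs over primes p ≤ y. -/
/-!
Rankin's trick: every `n ≤ x` satisfies `1 ≤ (x / n) ^ σ`, so `ψ(x, y)` is at most
`x ^ σ` times the sum of `n ^ (-σ)` over the `y`-smooth `n ≤ x`. Dropping the condition `n ≤ x`
only enlarges this sum, and the full sum over `y`-smooth numbers is the Euler product of the
completely multiplicative function `n ↦ n ^ (-σ)` over the primes `p ≤ y`.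
-/

open scoped Classical

/-- `ψ(x, y)`: the number of `y`-smooth integers `1 ≤ n ≤ x`. -/
noncomputable def smoothCount (x y : ℝ) : ℕ :=
  ((Finset.range (⌊x⌋₊ + 1)).filter
    (fun n => 1 ≤ n ∧ ∀ p : ℕ, p.Prime → p ∣ n → (p : ℝ) ≤ y)).card

open Finset

noncomputable def natCastRpowHom (s : ℝ) : ℕ →* ℝ where
  toFun n := (n : ℝ) ^ s
  map_one' := by simp
  map_mul' m n := by
    push_cast
    exact Real.mul_rpow (Nat.cast_nonneg m) (Nat.cast_nonneg n)

theorem smoothCount_eq_card_smoothNumbersUpTo (x y : ℝ) :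
    smoothCount x y = #(Nat.smoothNumbersUpTo ⌊x⌋₊ (⌊y⌋₊ + 1)) := by
  unfold smoothCount Nat.smoothNumbersUpTo
  congr 1
  refine filter_congr fun n _ => ?_
  rw [Nat.one_le_iff_ne_zero, ← and_iff_right_of_imp Nat.ne_zero_of_mem_smoothNumbers,
    Nat.mem_smoothNumbers']
  refine and_congr_right fun _ => forall₃_congr fun p hp _ => ?_
  rw [Nat.lt_succ_iff, Nat.le_floor_iff' hp.ne_zero]

theorem sum_le_prod_primesBelow_geometric {f : ℕ →* ℝ} (hf0 : ∀ n, 0 ≤ f n)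
    (hf1 : ∀ {p : ℕ}, p.Prime → f p < 1) {N : ℕ} {s : Finset ℕ}
    (hs : (s : Set ℕ) ⊆ N.smoothNumbers) :
    ∑ n ∈ s, f n ≤ ∏ p ∈ N.primesBelow, (1 - f p)⁻¹ := by
  have hnorm : ∀ {p : ℕ}, p.Prime → ‖f p‖ < 1 := fun hp => by
    simpa only [Real.norm_of_nonneg (hf0 _)] using hf1 hp
  have euler := hasSum_subtype_iff_indicator.mp
    (EulerProduct.summable_and_hasSum_smoothNumbers_prod_primesBelow_geometric hnorm N).2
  calc ∑ n ∈ s, f n = ∑ n ∈ s, N.smoothNumbers.indicator f n :=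
        sum_congr rfl fun n hn => (Set.indicator_of_mem (hs hn) f).symm
    _ ≤ _ := sum_le_hasSum s (fun n _ => Set.indicator_nonneg (fun m _ => hf0 m) n) euler

theorem sum_rpow_neg_le_prod_primesBelow {σ : ℝ} (hσ : 0 < σ) {N : ℕ} {s : Finset ℕ}
    (hs : (s : Set ℕ) ⊆ N.smoothNumbers) :
    ∑ n ∈ s, (n : ℝ) ^ (-σ) ≤ ∏ p ∈ N.primesBelow, (1 - (p : ℝ) ^ (-σ))⁻¹ :=
  sum_le_prod_primesBelow_geometric (f := natCastRpowHom (-σ))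
    (fun n => Real.rpow_nonneg n.cast_nonneg _)
    (fun hp => Real.rpow_lt_one_of_one_lt_of_neg (by exact_mod_cast hp.one_lt) (neg_neg_of_pos hσ))
    hs

theorem card_le_rpow_mul_sum_rpow_neg {x σ : ℝ} (hσ : 0 ≤ σ) {s : Finset ℕ}
    (hs : ∀ n ∈ s, 0 < n ∧ (n : ℝ) ≤ x) :
    (#s : ℝ) ≤ x ^ σ * ∑ n ∈ s, (n : ℝ) ^ (-σ) := by
  rw [card_eq_sum_ones, Nat.cast_sum, Nat.cast_one, mul_sum]
  refine sum_le_sum fun n hn => ?_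
  obtain ⟨hn0, hnx⟩ := hs n hn
  have hn : (0 : ℝ) < n := by exact_mod_cast hn0
  rw [Real.rpow_neg hn.le, ← div_eq_mul_inv, ← Real.div_rpow (hn.le.trans hnx) hn.le]
  exact Real.one_le_rpow ((one_le_div hn).2 hnx) hσ

theorem stmt14_general (σ : ℝ) (hσ0 : 0 < σ) (x : ℝ) (hx : 1 ≤ x)
    (y : ℝ) :
    (smoothCount x y : ℝ) ≤
      x ^ σ * ∏ p ∈ (Finset.range (⌊y⌋₊ + 1)).filter Nat.Prime,
        (1 - (p : ℝ) ^ (-σ))⁻¹ := by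
  set S := Nat.smoothNumbersUpTo ⌊x⌋₊ (⌊y⌋₊ + 1)
  have hsmooth : (S : Set ℕ) ⊆ (⌊y⌋₊ + 1).smoothNumbers := fun n hn =>
    (Nat.mem_smoothNumbersUpTo.1 hn).2
  have hsize : ∀ n ∈ S, 0 < n ∧ (n : ℝ) ≤ x := fun n hn => by
    obtain ⟨hnx, hn⟩ := Nat.mem_smoothNumbersUpTo.1 hn
    exact ⟨Nat.pos_of_ne_zero hn.1, (Nat.le_floor_iff' hn.1).1 hnx⟩
  rw [smoothCount_eq_card_smoothNumbersUpTo]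
  calc (#S : ℝ) ≤ x ^ σ * ∑ n ∈ S, (n : ℝ) ^ (-σ) := card_le_rpow_mul_sum_rpow_neg hσ0.le hsize
    _ ≤ _ := mul_le_mul_of_nonneg_left (sum_rpow_neg_le_prod_primesBelow hσ0 hsmooth)
        (Real.rpow_nonneg (zero_le_one.trans hx) σ)

/-- Rankin's bound: for `0 < σ < 1`, `x ≥ 1`, `y ≥ 2`,
`ψ(x, y) ≤ x^σ ∏_{p ≤ y} (1 − p^{−σ})⁻¹`. -/
theorem stmt14 (σ : ℝ) (hσ0 : 0 < σ) (hσ1 : σ < 1) (x : ℝ) (hx : 1 ≤ x)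
    (y : ℝ) (hy : 2 ≤ y) :
    (smoothCount x y : ℝ) ≤
      x ^ σ * ∏ p ∈ (Finset.range (⌊y⌋₊ + 1)).filter Nat.Prime,
        (1 - (p : ℝ) ^ (-σ))⁻¹ :=
  stmt14_general σ hσ0 x hx y
end
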